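/- arXiv:2403.20224 — 3 statements merged into one kernel-verified Lean document; each statement's English description precedes it below -/
import Mathlib

section
/- If f : A → B and g : A → C are finite ring homomorphisms (i.e., B is a finitely generated A-module via f and C is a finitely generated A-module via g), then the ring extension A⋈^{f,g}(𝔟,𝔠) ⊆ B × C is finite, i.e., B × C is a finitely generated module over the subring A⋈^{f,g}(𝔟,𝔠). -/
/-- The bi-amalgamation of `A` with `(B, C)` along `(𝔟, 𝔠)` with respect to `(f, g)`:
the subring `{(f a + β, g a + γ) | a ∈ A, β ∈ 𝔟, γ ∈ 𝔠}` of `B × C`. -/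
def biAmalgamation {A B C : Type*} [CommRing A] [CommRing B] [CommRing C]
    (f : A →+* B) (g : A →+* C) (𝔟 : Ideal B) (𝔠 : Ideal C) : Subring (B × C) where
  carrier := {x | ∃ a β γ, β ∈ 𝔟 ∧ γ ∈ 𝔠 ∧ x = (f a + β, g a + γ)}
  one_mem' := ⟨1, 0, 0, 𝔟.zero_mem, 𝔠.zero_mem, by simp [Prod.ext_iff]⟩
  zero_mem' := ⟨0, 0, 0, 𝔟.zero_mem, 𝔠.zero_mem, by simp [Prod.ext_iff]⟩
  add_mem' := by
    rintro x y ⟨a₁, β₁, γ₁, hβ₁, hγ₁, rfl⟩ ⟨a₂, β₂, γ₂, hβ₂, hγ₂, rfl⟩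
    exact ⟨a₁ + a₂, β₁ + β₂, γ₁ + γ₂, 𝔟.add_mem hβ₁ hβ₂, 𝔠.add_mem hγ₁ hγ₂, by
      simp only [Prod.ext_iff, map_add, Prod.fst_add, Prod.snd_add]
      constructor <;> ring⟩
  neg_mem' := by
    rintro x ⟨a, β, γ, hβ, hγ, rfl⟩
    exact ⟨-a, -β, -γ, 𝔟.neg_mem hβ, 𝔠.neg_mem hγ, by
      simp only [Prod.ext_iff, map_neg, Prod.fst_neg, Prod.snd_neg]
      constructor <;> ring⟩
  mul_mem' := by
    rintro x y ⟨a₁, β₁, γ₁, hβ₁, hγ₁, rfl⟩ ⟨a₂, β₂, γ₂, hβ₂, hγ₂, rfl⟩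
    refine ⟨a₁ * a₂, f a₁ * β₂ + β₁ * f a₂ + β₁ * β₂,
      g a₁ * γ₂ + γ₁ * g a₂ + γ₁ * γ₂,
      𝔟.add_mem (𝔟.add_mem (Ideal.mul_mem_left _ _ hβ₂) (Ideal.mul_mem_right _ _ hβ₁))
        (Ideal.mul_mem_right _ _ hβ₁),
      𝔠.add_mem (𝔠.add_mem (Ideal.mul_mem_left _ _ hγ₂) (Ideal.mul_mem_right _ _ hγ₁))
        (Ideal.mul_mem_right _ _ hγ₁), by
      simp only [Prod.ext_iff, map_mul, Prod.fst_mul, Prod.snd_mul]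
      constructor <;> ring⟩

/-- If `f : A → B` and `g : A → C` are finite ring homomorphisms, then `B × C` is a
finitely generated module over the subring `A ⋈^{f,g} (𝔟,𝔠)`. -/
theorem biAmalgamation_finite_extension {A B C : Type*} [CommRing A] [CommRing B] [CommRing C]
    (f : A →+* B) (g : A →+* C) (𝔟 : Ideal B) (𝔠 : Ideal C)
    (hcomp : 𝔟.comap f = 𝔠.comap g)
    (hf : f.Finite) (hg : g.Finite) :
    Module.Finite ↥(biAmalgamation f g 𝔟 𝔠) (B × C) := by
  letI := f.toAlgebra
  letI := g.toAlgebra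
  haveI : Module.Finite A B := hf
  haveI : Module.Finite A C := hg
  haveI : Module.Finite A (B × C) := Module.Finite.prod
  set S := biAmalgamation f g 𝔟 𝔠 with hS
  have hmem : ∀ a : A, (f a, g a) ∈ S := fun a =>
    ⟨a, 0, 0, 𝔟.zero_mem, 𝔠.zero_mem, by simp⟩
  let φ : A →+* S := ((f.prod g).codRestrict S.toSubsemiring hmem)
  letI : Algebra A S := φ.toAlgebra
  haveI : IsScalarTower A S (B × C) := ⟨fun a s x => by
    show (((φ a * s : S) : B × C)) * x = (f a, g a) • (((s : B × C)) * x)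
    ext <;> simp [Algebra.smul_def, mul_assoc, φ, RingHom.codRestrict, Subsemiring.coe_mul] <;> rfl⟩
  exact Module.Finite.of_restrictScalars_finite A S (B × C)
end

section
/- Assume that A⋈^{f,g}(𝔟,𝔠) is a Prüfer ring. Let 𝔞 be an ideal of A with 𝔦₀ ⊆ 𝔞, let p : A → A/𝔞 be the canonical projection, and assume f(p⁻¹(Reg(A/𝔞))) ⊆ Reg(B) and g(p⁻¹(Reg(A/𝔞))) ⊆ Reg(C), where Reg(R) denotes the set of non-zero-divisors of a ring R. Then A/𝔞 is a Prüfer ring. -/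
/-- A commutative ring `R` is a Prüfer ring if every finitely generated ideal containing
a non-zero-divisor is invertible: there is an `R`-submodule `F` of the total ring of
fractions of `R` with `I·F` equal to the unit submodule. -/
def IsPruferRing (R : Type*) [CommRing R] : Prop :=
  ∀ I : Ideal R, I.FG → (∃ r ∈ I, r ∈ nonZeroDivisors R) →
    ∃ F : Submodule R (FractionRing R),
      Submodule.map (Algebra.linearMap R (FractionRing R)) I * F = 1

section Aux
variable {A B C : Type*} [CommRing A] [CommRing B] [CommRing C]
    (f : A →+* B) (g : A →+* C) (𝔟 : Ideal B) (𝔠 : Ideal C)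

lemma mem_biAmalgamation_iff {x : B × C} :
    x ∈ biAmalgamation f g 𝔟 𝔠 ↔ ∃ a β γ, β ∈ 𝔟 ∧ γ ∈ 𝔠 ∧ x = (f a + β, g a + γ) :=
  Iff.rfl

/-- `a ↦ (f a, g a)` as a ring hom into the bi-amalgamation. -/
def biPsi : A →+* ↥(biAmalgamation f g 𝔟 𝔠) where
  toFun a := ⟨(f a, g a), a, 0, 0, 𝔟.zero_mem, 𝔠.zero_mem, by simp⟩
  map_one' := Subtype.ext (by simp [Prod.ext_iff])
  map_mul' x y := Subtype.ext (by simp [Prod.ext_iff])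
  map_zero' := Subtype.ext (by simp [Prod.ext_iff])
  map_add' x y := Subtype.ext (by simp [Prod.ext_iff])

variable (𝔞 : Ideal A)

/-- Projection from the bi-amalgamation to `A ⧸ 𝔞`. -/
noncomputable def biPi (x : ↥(biAmalgamation f g 𝔟 𝔠)) : A ⧸ 𝔞 :=
  Ideal.Quotient.mk 𝔞 ((mem_biAmalgamation_iff f g 𝔟 𝔠).mp x.2).choose

lemma biPi_spec (h𝔞 : 𝔟.comap f ≤ 𝔞) (x : ↥(biAmalgamation f g 𝔟 𝔠)) {a β γ} (hβ : β ∈ 𝔟) (hγ : γ ∈ 𝔠)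
    (hx : (x : B × C) = (f a + β, g a + γ)) : biPi f g 𝔟 𝔠 𝔞 x = Ideal.Quotient.mk 𝔞 a := by
  obtain ⟨β', γ', hβ', hγ', hx'⟩ := ((mem_biAmalgamation_iff f g 𝔟 𝔠).mp x.2).choose_spec
  set a' := ((mem_biAmalgamation_iff f g 𝔟 𝔠).mp x.2).choose
  rw [hx] at hx'
  have h1 : f a + β = f a' + β' := congrArg Prod.fst hx'
  have hsub : a' - a ∈ 𝔞 := by
    apply h𝔞
    have : f (a' - a) = β - β' := by
      rw [map_sub]
      have := h1
      linear_combination -this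
    simpa [Ideal.mem_comap, this] using 𝔟.sub_mem hβ hβ'
  unfold biPi
  rw [Ideal.Quotient.mk_eq_mk_iff_sub_mem]
  exact hsub

/-- Projection ring hom from the bi-amalgamation to `A ⧸ 𝔞`. -/
noncomputable def biPiHom (h𝔞 : 𝔟.comap f ≤ 𝔞) : ↥(biAmalgamation f g 𝔟 𝔠) →+* A ⧸ 𝔞 where
  toFun := biPi f g 𝔟 𝔠 𝔞
  map_one' := by
    show biPi f g 𝔟 𝔠 𝔞 1 = 1
    rw [biPi_spec f g 𝔟 𝔠 𝔞 h𝔞 (a := 1) 1 𝔟.zero_mem 𝔠.zero_mem (by simp [Prod.ext_iff]), map_one]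
  map_zero' := by
    show biPi f g 𝔟 𝔠 𝔞 0 = 0
    rw [biPi_spec f g 𝔟 𝔠 𝔞 h𝔞 (a := 0) 0 𝔟.zero_mem 𝔠.zero_mem (by simp [Prod.ext_iff]), map_zero]
  map_mul' x y := by
    obtain ⟨a₁, β₁, γ₁, hβ₁, hγ₁, hx⟩ := (mem_biAmalgamation_iff f g 𝔟 𝔠).mp x.2
    obtain ⟨a₂, β₂, γ₂, hβ₂, hγ₂, hy⟩ := (mem_biAmalgamation_iff f g 𝔟 𝔠).mp y.2
    have hxy : ((x * y : _) : B × C) =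
        (f (a₁ * a₂) + (f a₁ * β₂ + β₁ * f a₂ + β₁ * β₂),
         g (a₁ * a₂) + (g a₁ * γ₂ + γ₁ * g a₂ + γ₁ * γ₂)) := by
      have : ((x * y : _) : B × C) = (x : B × C) * (y : B × C) := rfl
      rw [this, hx, hy]
      simp only [Prod.ext_iff, map_mul, Prod.fst_mul, Prod.snd_mul, Prod.mk_mul_mk]
      constructor <;> ring
    show biPi f g 𝔟 𝔠 𝔞 (x * y) = biPi f g 𝔟 𝔠 𝔞 x * biPi f g 𝔟 𝔠 𝔞 y
    rw [biPi_spec f g 𝔟 𝔠 𝔞 h𝔞 x hβ₁ hγ₁ hx, biPi_spec f g 𝔟 𝔠 𝔞 h𝔞 y hβ₂ hγ₂ hy,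
      biPi_spec f g 𝔟 𝔠 𝔞 h𝔞 (x*y)
        (𝔟.add_mem (𝔟.add_mem (Ideal.mul_mem_left _ _ hβ₂) (Ideal.mul_mem_right _ _ hβ₁))
          (Ideal.mul_mem_right _ _ hβ₁))
        (𝔠.add_mem (𝔠.add_mem (Ideal.mul_mem_left _ _ hγ₂) (Ideal.mul_mem_right _ _ hγ₁))
          (Ideal.mul_mem_right _ _ hγ₁)) hxy, map_mul]
  map_add' x y := by
    obtain ⟨a₁, β₁, γ₁, hβ₁, hγ₁, hx⟩ := (mem_biAmalgamation_iff f g 𝔟 𝔠).mp x.2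
    obtain ⟨a₂, β₂, γ₂, hβ₂, hγ₂, hy⟩ := (mem_biAmalgamation_iff f g 𝔟 𝔠).mp y.2
    have hxy : ((x + y : _) : B × C) =
        (f (a₁ + a₂) + (β₁ + β₂), g (a₁ + a₂) + (γ₁ + γ₂)) := by
      have : ((x + y : _) : B × C) = (x : B × C) + (y : B × C) := rfl
      rw [this, hx, hy]
      simp only [Prod.ext_iff, map_add, Prod.fst_add, Prod.snd_add, Prod.mk_add_mk]
      constructor <;> ring
    show biPi f g 𝔟 𝔠 𝔞 (x + y) = biPi f g 𝔟 𝔠 𝔞 x + biPi f g 𝔟 𝔠 𝔞 y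
    rw [biPi_spec f g 𝔟 𝔠 𝔞 h𝔞 x hβ₁ hγ₁ hx, biPi_spec f g 𝔟 𝔠 𝔞 h𝔞 y hβ₂ hγ₂ hy,
      biPi_spec f g 𝔟 𝔠 𝔞 h𝔞 (x+y) (𝔟.add_mem hβ₁ hβ₂) (𝔠.add_mem hγ₁ hγ₂) hxy, map_add]

lemma biPiHom_psi (h𝔞 : 𝔟.comap f ≤ 𝔞) (a : A) :
    biPiHom f g 𝔟 𝔠 𝔞 h𝔞 (biPsi f g 𝔟 𝔠 a) = Ideal.Quotient.mk 𝔞 a :=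
  biPi_spec f g 𝔟 𝔠 𝔞 h𝔞 _ 𝔟.zero_mem 𝔠.zero_mem (by simp [biPsi])

end Aux


/-- If an ideal `I` containing `t` becomes invertible in the total fraction ring,
then `I * (tR : I) = tR`. -/
theorem mul_colon_span_singleton {R : Type*} [CommRing R] (I : Ideal R) (t : R) (htI : t ∈ I)
    (F : Submodule R (FractionRing R))
    (hF : Submodule.map (Algebra.linearMap R (FractionRing R)) I * F = 1) :
    I * (Ideal.span {t}).colon I = Ideal.span {t} := by
  set K : Ideal R := (Ideal.span {t}).colon I with hK
  have halgInj : Function.Injective (algebraMap R (FractionRing R)) :=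
    IsFractionRing.injective R (FractionRing R)
  have hkey : ∀ z ∈ Submodule.map (Algebra.linearMap R (FractionRing R)) I * F,
      ∃ r ∈ I * K, algebraMap R (FractionRing R) t * z = algebraMap R (FractionRing R) r := by
    intro z hz
    refine Submodule.mul_induction_on hz ?_ ?_
    · rintro x hx q hq
      obtain ⟨y, hy, rfl⟩ := hx
      have h1 : algebraMap R (FractionRing R) t * q ∈ (1 : Submodule R (FractionRing R)) := by
        rw [← hF]
        exact Submodule.mul_mem_mul (Submodule.mem_map_of_mem htI) hq
      obtain ⟨w, hw⟩ := Submodule.mem_one.mp h1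
      have hwK : w ∈ K := by
        rw [hK, Submodule.mem_colon]
        intro y' hy'
        have h2 : algebraMap R (FractionRing R) y' * q ∈ (1 : Submodule R (FractionRing R)) := by
          rw [← hF]
          exact Submodule.mul_mem_mul (Submodule.mem_map_of_mem hy') hq
        obtain ⟨c, hc⟩ := Submodule.mem_one.mp h2
        have heq : algebraMap R (FractionRing R) (y' * w) = algebraMap R (FractionRing R) (t * c) := by
          rw [map_mul, map_mul, hw, hc]; ring
        have heq' := halgInj heq
        rw [smul_eq_mul, Ideal.mem_span_singleton']
        exact ⟨c, by rw [mul_comm c t, ← heq', mul_comm]⟩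
      refine ⟨y * w, Ideal.mul_mem_mul hy hwK, ?_⟩
      have hty : Algebra.linearMap R (FractionRing R) y = algebraMap R (FractionRing R) y := rfl
      rw [hty, map_mul, hw]; ring
    · rintro x y ⟨r₁, hr₁, h₁⟩ ⟨r₂, hr₂, h₂⟩
      exact ⟨r₁ + r₂, add_mem hr₁ hr₂, by rw [map_add, mul_add, h₁, h₂]⟩
  obtain ⟨r, hrIK, hr⟩ := hkey 1 (by rw [hF]; exact Submodule.one_le.mp le_rfl)
  have htIK : t ∈ I * K := by
    have hteq : t = r := halgInj (by rw [← hr, mul_one])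
    rw [hteq]; exact hrIK
  refine le_antisymm (Ideal.mul_le.mpr fun y hy w hw => ?_)
    ((Ideal.span_singleton_le_iff_mem _).mpr htIK)
  have hmem := Submodule.mem_colon.mp hw y hy
  rw [smul_eq_mul] at hmem
  rw [mul_comm]; exact hmem

open scoped Pointwise

set_option maxHeartbeats 1000000 in
/-- If `A ⋈^{f,g} (𝔟,𝔠)` is Prüfer, `𝔞` is an ideal of `A` containing `𝔦₀`, and `f`, `g`
map elements of `A` regular modulo `𝔞` to regular elements, then `A/𝔞` is Prüfer. -/
theorem biAmalgamation_prufer_quotient_of_le {A B C : Type*}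
    [CommRing A] [CommRing B] [CommRing C]
    (f : A →+* B) (g : A →+* C) (𝔟 : Ideal B) (𝔠 : Ideal C)
    (hcomp : 𝔟.comap f = 𝔠.comap g)
    (hP : IsPruferRing ↥(biAmalgamation f g 𝔟 𝔠))
    (𝔞 : Ideal A)
    (hregf : ∀ a : A, Ideal.Quotient.mk 𝔞 a ∈ nonZeroDivisors (A ⧸ 𝔞) →
      f a ∈ nonZeroDivisors B)
    (hregg : ∀ a : A, Ideal.Quotient.mk 𝔞 a ∈ nonZeroDivisors (A ⧸ 𝔞) →
      g a ∈ nonZeroDivisors C)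
    (h𝔞 : 𝔟.comap f ≤ 𝔞) :
    IsPruferRing (A ⧸ 𝔞) := by
  classical
  intro Jq hJqfg hJqreg
  let π : ↥(biAmalgamation f g 𝔟 𝔠) →+* A ⧸ 𝔞 := biPiHom f g 𝔟 𝔠 𝔞 h𝔞
  let ψ : A →+* ↥(biAmalgamation f g 𝔟 𝔠) := biPsi f g 𝔟 𝔠
  obtain ⟨rq, hrI, hrreg⟩ := hJqreg
  obtain ⟨a₀, rfl⟩ := Ideal.Quotient.mk_surjective rq
  -- the lift of `mk a₀` is a non-zero-divisor of the bi-amalgamation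
  have htreg : ψ a₀ ∈ nonZeroDivisors ↥(biAmalgamation f g 𝔟 𝔠) := by
    rw [mem_nonZeroDivisors_iff_right]
    intro z hz
    have hz' : (z : B × C) * ((ψ a₀ : ↥(biAmalgamation f g 𝔟 𝔠)) : B × C) = 0 := by
      rw [← Subring.coe_mul]
      exact_mod_cast congrArg Subtype.val hz
    have h1 : (z : B × C).1 * f a₀ = 0 := congrArg Prod.fst hz'
    have h2 : (z : B × C).2 * g a₀ = 0 := congrArg Prod.snd hz'
    have hz1 : (z : B × C).1 = 0 := mem_nonZeroDivisors_iff_right.mp (hregf a₀ hrreg) _ h1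
    have hz2 : (z : B × C).2 = 0 := mem_nonZeroDivisors_iff_right.mp (hregg a₀ hrreg) _ h2
    exact Subtype.ext (Prod.ext hz1 hz2)
  -- lift a finite generating set of `Jq`
  obtain ⟨s, hs⟩ := hJqfg
  have hsur := Ideal.Quotient.mk_surjective (I := 𝔞)
  let ℓ : A ⧸ 𝔞 → A := fun x => (hsur x).choose
  have hℓ : ∀ x, Ideal.Quotient.mk 𝔞 (ℓ x) = x := fun x => (hsur x).choose_spec
  set T : Set ↥(biAmalgamation f g 𝔟 𝔠) := insert (ψ a₀) ((fun x => ψ (ℓ x)) '' ↑s) with hT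
  set I : Ideal ↥(biAmalgamation f g 𝔟 𝔠) := Ideal.span T with hI
  have htI : ψ a₀ ∈ I := Ideal.subset_span (Set.mem_insert _ _)
  have hIfg : I.FG := Submodule.fg_span ((s.finite_toSet.image _).insert _)
  obtain ⟨F, hF⟩ := hP I hIfg ⟨ψ a₀, htI, htreg⟩
  -- `π` maps `I` onto `Jq`
  have hmapI : Ideal.map π I = Jq := by
    rw [hI, Ideal.map_span]
    have himg : π '' T = insert (Ideal.Quotient.mk 𝔞 a₀) ↑s := by
      rw [hT, Set.image_insert_eq, Set.image_image]
      congr 1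
      · exact biPiHom_psi f g 𝔟 𝔠 𝔞 h𝔞 a₀
      · rw [show (fun x => π (ψ (ℓ x))) = fun x => x from funext fun x => by
          rw [show π (ψ (ℓ x)) = Ideal.Quotient.mk 𝔞 (ℓ x) from
            biPiHom_psi f g 𝔟 𝔠 𝔞 h𝔞 (ℓ x), hℓ], Set.image_id']
    rw [himg]
    refine le_antisymm (Ideal.span_le.mpr (Set.insert_subset hrI ?_)) ?_
    · rw [← hs]; exact Ideal.subset_span
    · rw [← hs]; exact Ideal.span_mono (Set.subset_insert _ _)
  have hIK : I * (Ideal.span {ψ a₀}).colon I = Ideal.span {ψ a₀} :=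
    mul_colon_span_singleton I (ψ a₀) htI F hF
  -- push down to `A ⧸ 𝔞`
  have hmap : Jq * Ideal.map π ((Ideal.span {ψ a₀}).colon I) =
      Ideal.span {Ideal.Quotient.mk 𝔞 a₀} := by
    rw [← hmapI, ← Ideal.map_mul, hIK, Ideal.map_span, Set.image_singleton,
      biPiHom_psi f g 𝔟 𝔠 𝔞 h𝔞 a₀]
  have hu : IsUnit (algebraMap (A ⧸ 𝔞) (FractionRing (A ⧸ 𝔞)) (Ideal.Quotient.mk 𝔞 a₀)) :=
    IsLocalization.map_units (FractionRing (A ⧸ 𝔞)) (⟨_, hrreg⟩ : nonZeroDivisors (A ⧸ 𝔞))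
  obtain ⟨u, hu⟩ := hu
  refine ⟨Submodule.span (A ⧸ 𝔞) {(↑u⁻¹ : FractionRing (A ⧸ 𝔞))} *
    Submodule.map (Algebra.linearMap (A ⧸ 𝔞) (FractionRing (A ⧸ 𝔞)))
      (Ideal.map π ((Ideal.span {ψ a₀}).colon I)), ?_⟩
  have hofId : (Algebra.ofId (A ⧸ 𝔞) (FractionRing (A ⧸ 𝔞))).toLinearMap =
      Algebra.linearMap (A ⧸ 𝔞) (FractionRing (A ⧸ 𝔞)) := rfl
  calc Submodule.map (Algebra.linearMap (A ⧸ 𝔞) (FractionRing (A ⧸ 𝔞))) Jq *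
        (Submodule.span (A ⧸ 𝔞) {(↑u⁻¹ : FractionRing (A ⧸ 𝔞))} *
          Submodule.map (Algebra.linearMap (A ⧸ 𝔞) (FractionRing (A ⧸ 𝔞)))
            (Ideal.map π ((Ideal.span {ψ a₀}).colon I)))
      = (Submodule.map (Algebra.linearMap (A ⧸ 𝔞) (FractionRing (A ⧸ 𝔞))) Jq *
          Submodule.map (Algebra.linearMap (A ⧸ 𝔞) (FractionRing (A ⧸ 𝔞)))
            (Ideal.map π ((Ideal.span {ψ a₀}).colon I))) *
          Submodule.span (A ⧸ 𝔞) {(↑u⁻¹ : FractionRing (A ⧸ 𝔞))} := by ring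
    _ = Submodule.map (Algebra.linearMap (A ⧸ 𝔞) (FractionRing (A ⧸ 𝔞)))
          (Jq * Ideal.map π ((Ideal.span {ψ a₀}).colon I)) *
          Submodule.span (A ⧸ 𝔞) {(↑u⁻¹ : FractionRing (A ⧸ 𝔞))} := by
        rw [← hofId, ← Submodule.map_mul]
    _ = Submodule.map (Algebra.linearMap (A ⧸ 𝔞) (FractionRing (A ⧸ 𝔞)))
          (Ideal.span {Ideal.Quotient.mk 𝔞 a₀}) *
          Submodule.span (A ⧸ 𝔞) {(↑u⁻¹ : FractionRing (A ⧸ 𝔞))} := by rw [hmap]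
    _ = Submodule.span (A ⧸ 𝔞) {algebraMap (A ⧸ 𝔞) (FractionRing (A ⧸ 𝔞))
          (Ideal.Quotient.mk 𝔞 a₀)} *
          Submodule.span (A ⧸ 𝔞) {(↑u⁻¹ : FractionRing (A ⧸ 𝔞))} := by
        rw [Ideal.span, Submodule.map_span, Set.image_singleton]; rfl
    _ = Submodule.span (A ⧸ 𝔞) (({algebraMap (A ⧸ 𝔞) (FractionRing (A ⧸ 𝔞))
          (Ideal.Quotient.mk 𝔞 a₀)} : Set (FractionRing (A ⧸ 𝔞))) *
          ({(↑u⁻¹ : FractionRing (A ⧸ 𝔞))} : Set (FractionRing (A ⧸ 𝔞)))) :=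
        Submodule.span_mul_span _ _ _
    _ = Submodule.span (A ⧸ 𝔞) {(1 : FractionRing (A ⧸ 𝔞))} := by
        rw [Set.singleton_mul_singleton, ← hu, Units.mul_inv]
    _ = 1 := Submodule.one_eq_span.symm
end

section
/- Let a ∈ A, b ∈ 𝔟, c ∈ 𝔠 and assume that (f(a)+b, g(a)+c) is a zero-divisor of A⋈^{f,g}(𝔟,𝔠). Then at least one of the following holds: (1) a + 𝔦₀ is a zero-divisor of A/𝔦₀; (2) there exists (b', c') ∈ 𝔟 × 𝔠 with (b', c') ≠ (0, 0) such that b'(f(a)+b) = 0 and c'(g(a)+c) = 0. -/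
/-- If `(f a + β, g a + γ)` is a zero-divisor of `A ⋈^{f,g} (𝔟,𝔠)`, then either
`a + 𝔦₀` is a zero-divisor of `A/𝔦₀`, or there is `(b', c') ∈ 𝔟 × 𝔠`, `(b',c') ≠ (0,0)`,
with `b'(f a + β) = 0` and `c'(g a + γ) = 0`. -/
theorem biAmalgamation_zero_divisor {A B C : Type*} [CommRing A] [CommRing B] [CommRing C]
    (f : A →+* B) (g : A →+* C) (𝔟 : Ideal B) (𝔠 : Ideal C)
    (hcomp : 𝔟.comap f = 𝔠.comap g)
    (a : A) (β : B) (γ : C) (hβ : β ∈ 𝔟) (hγ : γ ∈ 𝔠)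
    (hzd : ∃ y : ↥(biAmalgamation f g 𝔟 𝔠), y ≠ 0 ∧
      ((f a + β, g a + γ) : B × C) * (y : B × C) = 0) :
    (∃ z : A ⧸ 𝔟.comap f, z ≠ 0 ∧ Ideal.Quotient.mk (𝔟.comap f) a * z = 0) ∨
    (∃ b' ∈ 𝔟, ∃ c' ∈ 𝔠, (b', c') ≠ ((0 : B), (0 : C)) ∧
      b' * (f a + β) = 0 ∧ c' * (g a + γ) = 0) := by
  obtain ⟨y, hy0, hmul⟩ := hzd
  obtain ⟨a', β', γ', hβ', hγ', hy⟩ := y.2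
  have hB : (f a + β) * (f a' + β') = 0 := by
    have := congrArg Prod.fst hmul
    simp [hy] at this; simpa using this
  have hC : (g a + γ) * (g a' + γ') = 0 := by
    have := congrArg Prod.snd hmul
    simp [hy] at this; simpa using this
  by_cases ha' : a' ∈ 𝔟.comap f
  · right
    refine ⟨f a' + β', 𝔟.add_mem ha' hβ', g a' + γ', 𝔠.add_mem (by have := hcomp ▸ ha'; exact this) hγ', ?_,
      by rw [mul_comm]; exact hB, by rw [mul_comm]; exact hC⟩
    intro h
    apply hy0
    apply Subtype.ext
    rw [hy, h]; rfl
  · left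
    refine ⟨Ideal.Quotient.mk (𝔟.comap f) a', ?_, ?_⟩
    · simpa [Ideal.Quotient.eq_zero_iff_mem] using ha'
    · rw [← map_mul, Ideal.Quotient.eq_zero_iff_mem, Ideal.mem_comap, map_mul]
      have : f a * f a' = (f a + β) * (f a' + β') - (f a + β) * β' - β * (f a' + β') + β * β' := by
        ring
      rw [this, hB]
      refine Ideal.add_mem _ (Ideal.sub_mem _ (Ideal.sub_mem _ 𝔟.zero_mem
        (Ideal.mul_mem_left _ _ hβ')) (Ideal.mul_mem_right _ _ hβ)) (Ideal.mul_mem_right _ _ hβ)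
end
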